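/- arXiv:1611.04098 — 2 statements merged into one kernel-verified Lean document; each statement's English description precedes it below -/
import Mathlib

section
/- Let (W,S) be a Coxeter system, w, x ∈ W, let s = s j be a simple reflection, and suppose d(x, w) < d(x, w * s). If t = s i and t' = s i' are simple reflections such that both d(x * t, w * s) < d(x * t, w) and d(x * t', w * s) < d(x * t', w) (i.e. both (x, x * t) and (x, x * t') are grey edges for the pair (w, w * s)), then x * t = x * t' (equivalently i = i'). Hence every vertex of the Cayley graph is adjacent to at most one grey edge. -/
/-!
Put `u = x⁻¹ * w`. The hypotheses say `ℓ (u * s j) = ℓ u + 1` and that `s i` is a left descent of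
`u * s j`. By the strong exchange condition `s i` lies in the left inversion sequence of the word
`ω ++ [j]` for a reduced word `ω` of `u`; it cannot occur in that of `ω` (it would shorten `u`), so
`s i = u * s j * u⁻¹`. Thus `s i = s i'`, and `i = i'` because Tits' geometric representation
separates the simple reflections. The exchange condition itself comes from the action of `W` on
`W × ZMod 2` in which the parity of the occurrences of `t` in the left inversion sequence of a word
depends only on the group element the word represents.
-/

namespace CoxeterMatrix

variable {B : Type*} (M : CoxeterMatrix B)

/-- For `M a b = 0` (the entry `∞`) the junk value `π / 0 = 0` gives the correct entry `-1`. -/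
noncomputable def cosForm (a b : B) : ℝ := -Real.cos (Real.pi / M a b)

@[simp]
theorem cosForm_self (a : B) : M.cosForm a a = 1 := by
  simp [cosForm]

theorem cosForm_comm (a b : B) : M.cosForm a b = M.cosForm b a := by
  rw [cosForm, cosForm, M.symmetric]

noncomputable def pairing (a : B) : (B →₀ ℝ) →ₗ[ℝ] ℝ :=
  Finsupp.linearCombination ℝ fun b => M.cosForm b a

@[simp]
theorem pairing_single (a b : B) (r : ℝ) :
    M.pairing a (Finsupp.single b r) = r * M.cosForm b a := by
  simp [pairing]

theorem geomReflection_involutive (a : B) :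
    Function.Involutive fun v : B →₀ ℝ => v - Finsupp.single a (2 * M.pairing a v) := by
  intro v
  simp only [map_sub, pairing_single, cosForm_self]
  rw [sub_sub, ← Finsupp.single_add]
  ring_nf
  simp

noncomputable def geomReflection (a : B) : Equiv.Perm (B →₀ ℝ) :=
  (M.geomReflection_involutive a).toPerm

theorem geomReflection_apply (a : B) (v : B →₀ ℝ) :
    M.geomReflection a v = v - Finsupp.single a (2 * M.pairing a v) := rfl

theorem pairing_geomReflection (a b : B) (v : B →₀ ℝ) :
    M.pairing b (M.geomReflection a v) = M.pairing b v - 2 * M.pairing a v * M.cosForm a b := by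
  rw [geomReflection_apply, map_sub, pairing_single]

/-- `σₐ σ_b` rotates the pairings with `eₐ, e_b` by the angle `2θ`; the formulas are multiplied
through by `sin θ` so that no division occurs. -/
theorem exists_geomReflection_mul_pow_apply {a b : B} {θ : ℝ}
    (hab : M.cosForm a b = -Real.cos θ) (n : ℕ) (v : B →₀ ℝ) :
    ∃ P Q : ℝ, ((M.geomReflection a * M.geomReflection b) ^ n) v
        = v + Finsupp.single a P + Finsupp.single b Q ∧
      Real.sin θ * M.pairing a (((M.geomReflection a * M.geomReflection b) ^ n) v) =
        Real.sin θ * Real.cos (2 * n * θ) * M.pairing a v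
          - Real.sin (2 * n * θ) * (Real.cos θ * M.pairing a v + M.pairing b v) ∧
      Real.sin θ * M.pairing b (((M.geomReflection a * M.geomReflection b) ^ n) v) =
        Real.sin θ * Real.cos (2 * n * θ) * M.pairing b v
          + Real.sin (2 * n * θ) * (M.pairing a v + Real.cos θ * M.pairing b v) := by
  induction n with
  | zero => exact ⟨0, 0, by simp⟩
  | succ n ih =>
    obtain ⟨P, Q, hv, hX, hY⟩ := ih
    have hba : M.cosForm b a = -Real.cos θ := by rw [cosForm_comm, hab]
    have hangle : 2 * ((n + 1 : ℕ) : ℝ) * θ = 2 * n * θ + 2 * θ := by push_cast; ring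
    rw [pow_succ', Equiv.Perm.mul_apply, Equiv.Perm.mul_apply, hangle, Real.sin_add,
      Real.cos_add, Real.sin_two_mul, Real.cos_two_mul]
    set u := ((M.geomReflection a * M.geomReflection b) ^ n) v
    refine ⟨P - 2 * M.pairing a (M.geomReflection b u), Q - 2 * M.pairing b u, ?_, ?_, ?_⟩
    · rw [geomReflection_apply, geomReflection_apply, hv, Finsupp.single_sub, Finsupp.single_sub]
      abel
    · simp only [pairing_geomReflection, cosForm_self, hba]
      linear_combination -hX - 2 * Real.cos θ * hY + 2 * Real.cos θ * Real.sin (2 * n * θ) *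
        M.pairing a v * Real.sin_sq_add_cos_sq θ
    · simp only [pairing_geomReflection, cosForm_self, hab, hba]
      linear_combination 2 * Real.cos θ * hX + (4 * Real.cos θ ^ 2 - 1) * hY +
        2 * Real.cos θ * Real.sin (2 * n * θ) * M.pairing b v * Real.sin_sq_add_cos_sq θ

theorem geomReflection_mul_pow_eq_one {a b : B} (hm : 2 ≤ M a b) :
    (M.geomReflection a * M.geomReflection b) ^ M a b = 1 := by
  set θ := Real.pi / M a b
  set c := Real.cos θ
  have hm' : (2 : ℝ) ≤ M a b := by exact_mod_cast hm
  have hsin : 0 < Real.sin θ :=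
    Real.sin_pos_of_pos_of_lt_pi (by positivity) (div_lt_self Real.pi_pos (by linarith))
  have hfull : 2 * (M a b : ℝ) * θ = 2 * Real.pi := by
    unfold θ; field_simp
  refine Equiv.ext fun v => ?_
  obtain ⟨P, Q, hv, hX, hY⟩ := M.exists_geomReflection_mul_pow_apply (θ := θ) rfl (M a b) v
  have hab : M.cosForm a b = -c := rfl
  have hba : M.cosForm b a = -c := by rw [cosForm_comm, hab]
  rw [hfull, Real.cos_two_pi, Real.sin_two_pi, hv] at hX hY
  simp only [map_add, pairing_single, cosForm_self, hab, hba] at hX hY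
  have hc : c ^ 2 < 1 := by nlinarith [Real.sin_sq_add_cos_sq θ]
  have hPc : P * (1 - c ^ 2) = 0 := by
    apply mul_left_cancel₀ hsin.ne'
    linear_combination hX + c * hY
  have hP : P = 0 := by simpa [sub_eq_zero, hc.ne'] using hPc
  have hQ : Q = 0 := by
    subst hP
    simpa [hsin.ne'] using hY
  simp [hv, hP, hQ]

theorem isLiftable_geomReflection : M.IsLiftable M.geomReflection := by
  intro a b
  rcases eq_or_ne a b with rfl | hab
  · rw [M.diagonal, pow_one]
    exact Equiv.ext (M.geomReflection_involutive a)
  rcases (M a b).eq_zero_or_pos with h0 | hpos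
  · rw [h0, pow_zero]
  · exact M.geomReflection_mul_pow_eq_one (by have := M.off_diagonal a b hab; omega)

end CoxeterMatrix

namespace CoxeterSystem

open List

variable {B W : Type*} [Group W] {M : CoxeterMatrix B} (cs : CoxeterSystem M W)

local prefix:100 "s " => cs.simple
local prefix:100 "π " => cs.wordProd
local prefix:100 "ℓ " => cs.length
local prefix:100 "lis " => cs.leftInvSeq

theorem simple_injective : Function.Injective cs.simple := by
  intro i i' h
  by_contra hne
  have hσ : M.geomReflection i = M.geomReflection i' := by
    rw [← cs.lift_apply_simple M.isLiftable_geomReflection, h, cs.lift_apply_simple]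
  have := congr($hσ (Finsupp.single i 1) i)
  simp only [CoxeterMatrix.geomReflection_apply, CoxeterMatrix.pairing_single,
    CoxeterMatrix.cosForm_self, Finsupp.sub_apply, Finsupp.single_eq_same,
    Finsupp.single_eq_of_ne hne] at this
  norm_num at this

theorem prod_map_alternatingWord_two_mul {G : Type*} [Monoid G] (f : B → G) (i j : B) (n : ℕ) :
    ((alternatingWord i j (2 * n)).map f).prod = (f i * f j) ^ n := by
  induction n with
  | zero => simp [alternatingWord]
  | succ n ih =>
    rw [Nat.mul_succ, alternatingWord_succ', alternatingWord_succ', if_neg (by simp),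
      if_pos (even_two_mul n), map_cons, map_cons, prod_cons, prod_cons, ih, pow_succ', mul_assoc]

theorem leftInvSeq_alternatingWord_two_mul (i j : B) (p : ℕ) :
    lis (alternatingWord i j (2 * p)) = (range (2 * p)).map fun k => s i * (s j * s i) ^ k := by
  refine ext_getElem (by simp) fun k hk _ => ?_
  rw [getElem_leftInvSeq_alternatingWord cs i j p k (by simpa using hk),
    prod_alternatingWord_eq_mul_pow, getElem_map, getElem_range,
    if_neg (by simp), show (2 * k + 1) / 2 = k by omega]

theorem even_count_leftInvSeq_braid [DecidableEq W] (i j : B) (t : W) :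
    Even (count t (lis (alternatingWord i j (2 * M i j)))) := by
  have hperiodic : ∀ k, s i * (s j * s i) ^ (M i j + k) = s i * (s j * s i) ^ k := fun k => by
    rw [pow_add, simple_mul_simple_pow', one_mul]
  rw [leftInvSeq_alternatingWord_two_mul, two_mul, range_add, map_append, map_map,
    Function.comp_def]
  simp only [hperiodic, count_append]
  exact ⟨_, rfl⟩

section ReflectionRepresentation

variable [DecidableEq W]

theorem reflectionPerm_involutive (i : B) :
    Function.Involutive fun p : W × ZMod 2 =>
      (MulAut.conj (s i) p.1, p.2 + if p.1 = s i then 1 else 0) := by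
  rintro ⟨t, z⟩
  have hinv : MulAut.conj (s i) (MulAut.conj (s i) t) = t := by
    rw [← MulAut.mul_apply, ← map_mul, cs.simple_mul_simple_self, map_one, MulAut.one_apply]
  have hconj : MulAut.conj (s i) t = s i ↔ t = s i :=
    (MulAut.conj (s i)).injective.eq_iff' (by simp)
  simp only [hinv, hconj, Prod.mk.injEq, true_and, add_assoc]
  split_ifs <;> simp only [CharTwo.add_self_eq_zero, add_zero]

noncomputable def reflectionPerm (i : B) : Equiv.Perm (W × ZMod 2) :=
  (cs.reflectionPerm_involutive i).toPerm

theorem reflectionPerm_apply (i : B) (t : W) (z : ZMod 2) :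
    cs.reflectionPerm i (t, z) = (MulAut.conj (s i) t, z + if t = s i then 1 else 0) := rfl

theorem prod_map_reflectionPerm_apply (ω : List B) (t : W) (z : ZMod 2) :
    (ω.map cs.reflectionPerm).prod (t, z) =
      (MulAut.conj (π ω) t, z + count (MulAut.conj (π ω) t) (lis ω)) := by
  induction ω generalizing t z with
  | nil => simp
  | cons i ω ih =>
    set u := MulAut.conj (π ω) t
    have hcount : count (MulAut.conj (s i) u) (lis (i :: ω)) =
        count u (lis ω) + if u = s i then 1 else 0 := by
      rw [leftInvSeq, count_cons, count_map_of_injective _ _ (MulAut.conj (s i)).injective]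
      simp only [beq_iff_eq, eq_comm (a := s i),
        (MulAut.conj (s i)).injective.eq_iff' (by simp : MulAut.conj (s i) (s i) = s i)]
    rw [map_cons, prod_cons, Equiv.Perm.mul_apply, ih, reflectionPerm_apply, wordProd_cons, map_mul,
      MulAut.mul_apply, hcount]
    push_cast
    rw [add_assoc]

theorem isLiftable_reflectionPerm : M.IsLiftable cs.reflectionPerm := by
  intro i j
  rw [← prod_map_alternatingWord_two_mul]
  refine Equiv.ext fun ⟨t, z⟩ => ?_
  have hprod : π (alternatingWord i j (2 * M i j)) = 1 := by
    rw [wordProd, prod_map_alternatingWord_two_mul, simple_mul_simple_pow]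
  obtain ⟨n, hn⟩ := cs.even_count_leftInvSeq_braid i j t
  rw [prod_map_reflectionPerm_apply, hprod, map_one, MulAut.one_apply, hn, Nat.cast_add,
    CharTwo.add_self_eq_zero, add_zero, Equiv.Perm.one_apply]

noncomputable def reflectionRep : W →* Equiv.Perm (W × ZMod 2) :=
  cs.lift ⟨cs.reflectionPerm, cs.isLiftable_reflectionPerm⟩

theorem reflectionRep_wordProd (ω : List B) :
    cs.reflectionRep (π ω) = (ω.map cs.reflectionPerm).prod := by
  rw [wordProd, map_list_prod, map_map]
  congr 2
  exact funext (cs.lift_apply_simple cs.isLiftable_reflectionPerm)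

theorem count_leftInvSeq_eq_of_wordProd_eq {ω ω' : List B} (h : π ω = π ω') (t : W) :
    (count t (lis ω) : ZMod 2) = count t (lis ω') := by
  have := congr(($(congrArg cs.reflectionRep h) ((MulAut.conj (π ω)).symm t, 0)).2)
  rw [reflectionRep_wordProd, reflectionRep_wordProd, prod_map_reflectionPerm_apply,
    prod_map_reflectionPerm_apply, ← h, MulEquiv.apply_symm_apply] at this
  simpa using this

end ReflectionRepresentation

theorem mem_leftInvSeq_of_isLeftDescent {ω : List B} {i : B}
    (hi : cs.IsLeftDescent (π ω) i) : s i ∈ lis ω := by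
  classical
  obtain ⟨ω', hω', hsω⟩ := cs.exists_isReduced (s i * π ω)
  have hprod : π ω = π (i :: ω') := by rw [wordProd_cons, ← hsω, simple_mul_simple_cancel_left]
  have hnot : s i ∉ lis ω' := fun hmem => by
    have := (cs.isLeftInversion_of_mem_leftInvSeq hω' hmem).2
    rw [← hsω, simple_mul_simple_cancel_left] at this
    exact hi.not_gt this
  have hcount := cs.count_leftInvSeq_eq_of_wordProd_eq hprod (s i)
  have hmap := count_map_of_injective (lis ω') _ (MulAut.conj (s i)).injective (s i)
  rw [show MulAut.conj (s i) (s i) = s i by simp] at hmap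
  rw [leftInvSeq, count_cons, hmap, count_eq_zero.mpr hnot] at hcount
  refine count_pos_iff.mp (Nat.pos_of_ne_zero fun h0 => ?_)
  simp [h0] at hcount

theorem simple_mul_eq_mul_simple_of_length_lt {u : W} {i j : B} (h0 : ℓ u < ℓ (u * s j))
    (h1 : ℓ (s i * u * s j) < ℓ (s i * u)) : s i * u = u * s j := by
  have hlen : ℓ (s i * u) = ℓ (u * s j) := by
    have := cs.length_mul_simple u j
    have := cs.length_simple_mul u i
    have := cs.length_simple_mul (u * s j) i
    rw [← mul_assoc] at this
    omega
  obtain ⟨ω, hω, rfl⟩ := cs.exists_isReduced u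
  have hdesc : cs.IsLeftDescent (π (ω.concat j)) i := by
    rwa [IsLeftDescent, wordProd_concat, ← mul_assoc, ← hlen]
  have hmem := cs.mem_leftInvSeq_of_isLeftDescent hdesc
  rw [leftInvSeq_concat, concat_eq_append, mem_append, mem_singleton] at hmem
  rcases hmem with hmem | hconj
  · have := (cs.isLeftInversion_of_mem_leftInvSeq hω hmem).2
    omega
  · rw [hconj]
    group

end CoxeterSystem

/-- Every vertex of the Cayley graph of a Coxeter system is adjacent to at most one
grey edge for a fixed pair `(w, w * s)` (distance `d(x, y) = ℓ(x⁻¹ * y)`): if both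
`(x, x * t)` and `(x, x * t')` are grey edges, then `x * t = x * t'`
(equivalently, `i = i'`). -/
theorem grey_edge_unique {B W : Type*} [Group W] {M : CoxeterMatrix B}
    (cs : CoxeterSystem M W) (w x : W) (j i i' : B)
    (h0 : cs.length (x⁻¹ * w) < cs.length (x⁻¹ * (w * cs.simple j)))
    (h1 : cs.length ((x * cs.simple i)⁻¹ * (w * cs.simple j)) <
      cs.length ((x * cs.simple i)⁻¹ * w))
    (h2 : cs.length ((x * cs.simple i')⁻¹ * (w * cs.simple j)) <
      cs.length ((x * cs.simple i')⁻¹ * w)) :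
    x * cs.simple i = x * cs.simple i' ∧ i = i' := by
  have hshift : ∀ (k : B) (v : W), (x * cs.simple k)⁻¹ * v = cs.simple k * (x⁻¹ * v) := by
    intro k v
    rw [mul_inv_rev, cs.inv_simple, mul_assoc]
  rw [← mul_assoc] at h0
  rw [hshift, hshift] at h1 h2
  have hi := cs.simple_mul_eq_mul_simple_of_length_lt h0 (by simpa only [mul_assoc] using h1)
  have hi' := cs.simple_mul_eq_mul_simple_of_length_lt h0 (by simpa only [mul_assoc] using h2)
  have hsimple : cs.simple i = cs.simple i' := mul_right_cancel (hi.trans hi'.symm)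
  exact ⟨by rw [hsimple], cs.simple_injective hsimple⟩
end

section
/- Let (W,S) be a Coxeter system with finite index set B, and let p : Option B → ℝ≥0 be step weights satisfying p (some i) ≤ p none for every i : B. For n : ℕ and w ∈ W let Wt n w = Σ over functions f : Fin n → Option B whose pointwise interpretations multiply (in order) to w, of the product Π_{j : Fin n} p (f j). Then for all n : ℕ and all w, w' ∈ W, if w ≤_B w' in the right weak Bruhat order, then Wt n w' ≤ Wt n w. -/
open scoped NNReal

/-- The total weight of lazy walks of length `n` (each step an element of `Option B`,
interpreted as `1` for `none` and the simple reflection `cs.simple i` for `some i`,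
with step weights `p`) whose steps multiply, in order, to `w`. -/
noncomputable def lazyWalkWeight {B W : Type*} [Fintype B] [DecidableEq W] [Group W]
    {M : CoxeterMatrix B} (cs : CoxeterSystem M W) (p : Option B → ℝ≥0)
    (n : ℕ) (w : W) : ℝ≥0 :=
  ∑ f ∈ Finset.univ.filter (fun f : Fin n → Option B =>
      (List.ofFn fun j => ((f j).elim 1 cs.simple)).prod = w),
    ∏ j : Fin n, p (f j)

/-!
Splitting off the first step, `Wt (n+1) v = p none * Wt n v + ∑ i, p (some i) * Wt n (s i * v)`.
It suffices to show `Wt n (u * s k) ≤ Wt n u` when `ℓ (u * s k) = ℓ u + 1`, by induction on `n`.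
Compare the terms for `v = u * s k` and `v = u`: for each `i`, either `s i * u` is again such a
`u` (induction), or `s i * u = u * s k`, a lifting property proved with Tits' reflection cocycle.
Since simple reflections are distinct (as seen in the geometric representation), the second case
occurs for at most one `i`, and there
`p none * Wt (u s) + p i * Wt u ≤ p none * Wt u + p i * Wt (u s)` is the rearrangement inequality,
because `p i ≤ p none`.
-/

open Real Module

open Polynomial.Chebyshev in
theorem Module.reflection_mul_reflection_pow_eq_one {V : Type*} [AddCommGroup V] [Module ℝ V]
    {x y : V} {f g : Dual ℝ V} (hf : f x = 2) (hg : g y = 2) {m : ℕ} (hm : 2 ≤ m)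
    (hfy : f y = -2 * cos (π / m)) (hgx : g x = -2 * cos (π / m)) :
    (reflection hf * reflection hg) ^ m = 1 := by
  set φ := 2 * π / m with hφ
  have ht : 2 * cos φ = f y * g x - 2 := by
    rw [hfy, hgx, hφ, mul_div_assoc, cos_two_mul]
    ring
  ext z
  /- The coefficients in this formula are products of the Chebyshev values
  `S n (2 cos φ) = sin ((n + 1) φ) / sin φ`; they vanish when `m ≥ 3`, and for `m = 2` (where
  `f y = g x = 0`) the two correction terms cancel. -/
  rw [reflection_mul_reflection_pow_apply hf hg m z _ ht, LinearEquiv.coe_one, id]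
  obtain rfl | hm3 : m = 2 ∨ 3 ≤ m := by omega
  · simp [hfy, hgx, hφ]
    module
  have hmφ : m * φ = 2 * π := by
    rw [hφ]
    field_simp
  have hsin : sin φ ≠ 0 := by
    refine (sin_pos_of_pos_of_lt_pi (by positivity) ?_).ne'
    rw [hφ, div_lt_iff₀ (by positivity)]
    have : (3 : ℝ) ≤ m := by exact_mod_cast hm3
    nlinarith [pi_pos]
  obtain ⟨k, rfl | rfl⟩ := Nat.even_or_odd' m
  · have hS : (S ℝ (k - 1)).eval (2 * cos φ) = 0 := by
      rw [← mul_eq_zero_iff_right hsin, S_two_mul_real_cos]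
      push_cast at hmφ ⊢
      rw [show ((k : ℝ) - 1 + 1) * φ = π by linarith, sin_pi]
    rw [show ((2 * k : ℕ) - 2 : ℤ) / 2 = k - 1 by omega,
      show ((2 * k : ℕ) - 1 : ℤ) / 2 = k - 1 by omega, hS]
    simp
  · have hS : (S ℝ k).eval (2 * cos φ) + (S ℝ (k - 1)).eval (2 * cos φ) = 0 := by
      rw [← mul_eq_zero_iff_right hsin, add_mul, S_two_mul_real_cos, S_two_mul_real_cos]
      push_cast at hmφ ⊢
      rw [show ((k : ℝ) + 1) * φ = φ / 2 + π by linarith,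
        show ((k : ℝ) - 1 + 1) * φ = π - φ / 2 by linarith, sin_pi_sub, sin_add_pi,
        neg_add_cancel]
    rw [show ((2 * k + 1 : ℕ) - 2 : ℤ) / 2 = k - 1 by omega,
      show ((2 * k + 1 : ℕ) - 1 : ℤ) / 2 = k by omega,
      show ((2 * k + 1 : ℕ) - 3 : ℤ) / 2 = k - 1 by omega,
      show ((2 * k + 1 : ℕ) : ℤ) / 2 = k by omega, hS]
    simp

namespace CoxeterMatrix

variable {B : Type*} (M : CoxeterMatrix B)

/-- The coroot `x ↦ 2 B(α_a, x)` of the geometric representation on `B →₀ ℝ`, where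
`B(α_a, α_b) = -cos (π / M a b)`. An entry `M a b = 0` stands for `m = ∞`, and the junk value
`π / 0 = 0` gives `-cos 0 = -1`, which is the correct pairing for it. -/
noncomputable def geomCoroot (a : B) : Dual ℝ (B →₀ ℝ) :=
  2 • Finsupp.linearCombination ℝ fun b => -cos (π / M a b)

lemma geomCoroot_single (a b : B) :
    M.geomCoroot a (Finsupp.single b 1) = -2 * cos (π / M a b) := by
  simp [geomCoroot]

lemma geomCoroot_single_self (a : B) : M.geomCoroot a (Finsupp.single a 1) = 2 := by
  simp [geomCoroot_single]

noncomputable def geomRefl (a : B) : (B →₀ ℝ) ≃ₗ[ℝ] (B →₀ ℝ) :=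
  reflection (M.geomCoroot_single_self a)

theorem isLiftable_geomRefl : M.IsLiftable M.geomRefl := by
  intro a b
  obtain rfl | hab := eq_or_ne a b
  · rw [M.diagonal, pow_one, geomRefl]
    nth_rw 1 [← reflection_inv]
    exact inv_mul_cancel _
  obtain h0 | hm := Nat.eq_zero_or_pos (M a b)
  · rw [h0, pow_zero]
  refine reflection_mul_reflection_pow_eq_one _ _ ?_ (M.geomCoroot_single a b) ?_
  · have := M.off_diagonal a b hab
    omega
  · rw [geomCoroot_single, M.symmetric]

end CoxeterMatrix

theorem CoxeterSystem.simple_injective_s11 {B W : Type*} [Group W] {M : CoxeterMatrix B}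
    (cs : CoxeterSystem M W) : Function.Injective cs.simple := by
  intro i j hij
  by_contra hne
  -- in the geometric representation `s i` negates `α_i`, while `s j` fixes its `i`-th coordinate
  have := congrArg (fun w => cs.lift ⟨_, M.isLiftable_geomRefl⟩ w (Finsupp.single i 1) i) hij
  simp [CoxeterMatrix.geomRefl, reflection_apply, CoxeterMatrix.geomCoroot_single,
    Ne.symm hne] at this
  norm_num at this

lemma ZMod.eq_zero_of_ne_one {x : ZMod 2} (hx : x ≠ 1) : x = 0 := by
  revert x
  decide

section ConjFlip

variable {G : Type*} [Group G] {s s' : G}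

def conjFlip [DecidableEq G] (s : G) : Equiv.Perm (G × ZMod 2) where
  toFun q := (s * q.1 * s⁻¹, q.2 + if q.1 = s then 1 else 0)
  invFun q := (s⁻¹ * q.1 * s, q.2 + if s⁻¹ * q.1 * s = s then 1 else 0)
  left_inv q := by simp [mul_assoc, add_assoc, CharTwo.add_self_eq_zero]
  right_inv q := by simp [mul_assoc, add_assoc, CharTwo.add_self_eq_zero]

@[simp]
lemma conjFlip_apply [DecidableEq G] (s t : G) (e : ZMod 2) :
    conjFlip s (t, e) = (s * t * s⁻¹, e + if t = s then 1 else 0) :=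
  rfl

lemma conj_pow_eq_mul_pow_iff (hs : s * s = 1) (hs' : s' * s' = 1) (k j : ℕ) (t : G) :
    (s * s') ^ k * t * ((s * s') ^ k)⁻¹ = s' * (s * s') ^ j ↔
      (s * s') ^ (2 * k + j) * t = s' := by
  have hsemi : SemiconjBy s' (s * s') (s * s')⁻¹ := by
    rw [SemiconjBy, mul_inv_rev, inv_eq_of_mul_eq_one_right hs, inv_eq_of_mul_eq_one_right hs',
      ← mul_assoc]
  rw [mul_inv_eq_iff_eq_mul, mul_assoc, ← pow_add, (hsemi.pow_right _).eq, inv_pow,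
    eq_inv_mul_iff_mul_eq, ← mul_assoc, ← pow_add]
  ring_nf

variable [DecidableEq G]

lemma conjFlip_mul_conjFlip_pow_apply (hs : s * s = 1) (hs' : s' * s' = 1) (k : ℕ) (t : G)
    (e : ZMod 2) :
    ((conjFlip s * conjFlip s') ^ k) (t, e) = ((s * s') ^ k * t * ((s * s') ^ k)⁻¹,
      e + ∑ r ∈ Finset.range (2 * k), if (s * s') ^ r * t = s' then 1 else 0) := by
  induction k with
  | zero => simp
  | succ k ih =>
    set x := (s * s') ^ k * t * ((s * s') ^ k)⁻¹
    have h₀ : x = s' ↔ (s * s') ^ (2 * k) * t = s' := by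
      simpa using conj_pow_eq_mul_pow_iff hs hs' k 0 t
    have h₁ : s' * x * s'⁻¹ = s ↔ (s * s') ^ (2 * k + 1) * t = s' := by
      rw [← conj_pow_eq_mul_pow_iff hs hs' k 1 t, pow_one, mul_inv_eq_iff_eq_mul,
        ← eq_inv_mul_iff_mul_eq, inv_eq_of_mul_eq_one_right hs']
    rw [pow_succ', Equiv.Perm.mul_apply, ih, Equiv.Perm.mul_apply, conjFlip_apply,
      conjFlip_apply, mul_add_one 2 k, Finset.sum_range_succ, Finset.sum_range_succ,
      if_congr h₀ rfl rfl, if_congr h₁ rfl rfl, pow_succ']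
    refine Prod.ext ?_ ?_
    · simp only [x, pow_succ', mul_inv_rev, mul_assoc]
    · simp only [add_assoc]

lemma conjFlip_mul_conjFlip_pow_eq_one (hs : s * s = 1) (hs' : s' * s' = 1) {m : ℕ}
    (hm : (s * s') ^ m = 1) : (conjFlip s * conjFlip s') ^ m = 1 := by
  ext ⟨t, e⟩ : 1
  rw [conjFlip_mul_conjFlip_pow_apply hs hs', two_mul, Finset.sum_range_add]
  simp [hm, pow_add, CharTwo.add_self_eq_zero]

end ConjFlip

namespace CoxeterSystem

variable {B W : Type*} [Group W] {M : CoxeterMatrix B} (cs : CoxeterSystem M W) [DecidableEq W]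

/-- Tits' permutation representation of `W` on (reflections) × `{±1}`, carried by all of
`W × ZMod 2` so that no subtype of reflections is needed. -/
def reflRep : W →* Equiv.Perm (W × ZMod 2) :=
  cs.lift ⟨fun i => conjFlip (cs.simple i), fun i j => conjFlip_mul_conjFlip_pow_eq_one
    (cs.simple_mul_simple_self i) (cs.simple_mul_simple_self j) (cs.simple_mul_simple_pow i j)⟩

def reflCocycle (w t : W) : ZMod 2 := (cs.reflRep w (t, 0)).2

@[simp]
lemma reflRep_simple (i : B) : cs.reflRep (cs.simple i) = conjFlip (cs.simple i) :=
  cs.lift_apply_simple _ i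

lemma reflRep_apply (w t : W) (e : ZMod 2) :
    cs.reflRep w (t, e) = (w * t * w⁻¹, cs.reflCocycle w t + e) := by
  induction w using cs.simple_induction_left generalizing e with
  | one => simp [reflCocycle]
  | mul_simple_left w i ih =>
    have h (e : ZMod 2) : cs.reflRep (cs.simple i * w) (t, e) =
        (cs.simple i * w * t * (cs.simple i * w)⁻¹,
          cs.reflCocycle w t + e + if w * t * w⁻¹ = cs.simple i then 1 else 0) := by
      simp [ih, mul_assoc]
    rw [reflCocycle, h, h]
    simp only [add_zero, add_right_comm]

lemma reflCocycle_mul (u v t : W) :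
    cs.reflCocycle (u * v) t = cs.reflCocycle u (v * t * v⁻¹) + cs.reflCocycle v t := by
  rw [reflCocycle, map_mul, Equiv.Perm.mul_apply, cs.reflRep_apply v, add_zero, reflRep_apply]

lemma reflCocycle_simple (i : B) (t : W) :
    cs.reflCocycle (cs.simple i) t = if t = cs.simple i then 1 else 0 := by
  simp [reflCocycle]

lemma reflCocycle_wordProd (ω : List B) (t : W) :
    cs.reflCocycle (cs.wordProd ω) t = (cs.rightInvSeq ω).count t := by
  induction ω with
  | nil => simp [reflCocycle]
  | cons i ω ih =>
    have h : cs.wordProd ω * t * (cs.wordProd ω)⁻¹ = cs.simple i ↔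
        (cs.wordProd ω)⁻¹ * cs.simple i * cs.wordProd ω = t := by
      constructor <;> intro h <;> rw [← h] <;> group
    rw [wordProd_cons, reflCocycle_mul, ih, reflCocycle_simple, rightInvSeq, List.count_cons]
    simp only [beq_iff_eq, ← h]
    push_cast
    ring

theorem length_mul_lt_of_reflCocycle_eq_one {w t : W} (h : cs.reflCocycle w t = 1) :
    cs.length (w * t) < cs.length w := by
  obtain ⟨ω, hω, rfl⟩ := cs.exists_isReduced w
  rw [reflCocycle_wordProd] at h
  have hcount : (cs.rightInvSeq ω).count t ≠ 0 := by
    rintro h0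
    simp [h0] at h
  have hmem := List.count_pos_iff.mp (Nat.pos_of_ne_zero hcount)
  exact (cs.isRightInversion_of_mem_rightInvSeq hω hmem).2

theorem reflCocycle_simple_eq_one_iff (w : W) (k : B) :
    cs.reflCocycle w (cs.simple k) = 1 ↔ cs.IsRightDescent w k := by
  refine ⟨cs.length_mul_lt_of_reflCocycle_eq_one, fun hw => ?_⟩
  by_contra h
  have h' : cs.reflCocycle (w * cs.simple k) (cs.simple k) = 1 := by
    rw [reflCocycle_mul, mul_inv_cancel_right, ZMod.eq_zero_of_ne_one h, reflCocycle_simple,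
      if_pos rfl, zero_add]
  have := cs.length_mul_lt_of_reflCocycle_eq_one h'
  rw [simple_mul_simple_cancel_right] at this
  exact lt_asymm hw this

theorem simple_mul_eq_mul_simple {u : W} {i k : B} (hu : ¬cs.IsRightDescent u k)
    (hiu : cs.IsRightDescent (cs.simple i * u) k) : cs.simple i * u = u * cs.simple k := by
  rw [← reflCocycle_simple_eq_one_iff] at hu hiu
  rw [reflCocycle_mul, reflCocycle_simple, ZMod.eq_zero_of_ne_one hu, add_zero] at hiu
  split_ifs at hiu with h
  · rw [← h]
    group
  · exact absurd hiu zero_ne_one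

end CoxeterSystem

lemma add_sum_mul_le_add_sum_mul_of_exchange {ι : Type*} [Fintype ι] [DecidableEq ι]
    {q : ℝ≥0} {p : ι → ℝ≥0} (hp : ∀ i, p i ≤ q) {x y : ℝ≥0} (hxy : x ≤ y) {F G : ι → ℝ≥0}
    {i₀ : ι} (hF : F i₀ = y) (hG : G i₀ = x) (hFG : ∀ i ≠ i₀, F i ≤ G i) :
    q * x + ∑ i, p i * F i ≤ q * y + ∑ i, p i * G i := by
  rw [← Finset.add_sum_erase _ _ (Finset.mem_univ i₀),
    ← Finset.add_sum_erase _ _ (Finset.mem_univ i₀), hF, hG, ← add_assoc, ← add_assoc]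
  gcongr ?_ + ?_
  · simpa only [add_comm] using mul_add_mul_le_mul_add_mul (hp i₀) hxy
  · gcongr with i hi
    exact hFG i (Finset.ne_of_mem_erase hi)

section LazyWalk

variable {B W : Type*} [Fintype B] [DecidableEq W] [Group W] {M : CoxeterMatrix B}
  (cs : CoxeterSystem M W) {p : Option B → ℝ≥0}

lemma lazyWalkWeight_zero (w : W) : lazyWalkWeight cs p 0 w = if w = 1 then 1 else 0 := by
  simp only [lazyWalkWeight, Finset.univ_unique, List.ofFn_zero, List.prod_nil,
    Finset.univ_eq_empty, Finset.prod_empty, Finset.sum_const, nsmul_eq_mul, mul_one, eq_comm]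
  split_ifs <;> simp [*]

lemma lazyWalkWeight_succ (n : ℕ) (w : W) :
    lazyWalkWeight cs p (n + 1) w = p none * lazyWalkWeight cs p n w +
      ∑ i, p (some i) * lazyWalkWeight cs p n (cs.simple i * w) := by
  have hstep (i : B) (v : W) : cs.simple i * v = w ↔ v = cs.simple i * w := by
    rw [← eq_inv_mul_iff_mul_eq, cs.inv_simple]
  simp only [lazyWalkWeight, Finset.sum_filter, Finset.mul_sum]
  rw [← (Fin.consEquiv fun _ => Option B).sum_comp, Fintype.sum_prod_type, Fintype.sum_option]
  simp [Fin.consEquiv, List.ofFn_succ, Fin.prod_univ_succ, hstep]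

theorem lazyWalkWeight_mul_simple_le (hp : ∀ i : B, p (some i) ≤ p none) (n : ℕ) {u : W}
    {k : B} (hu : ¬cs.IsRightDescent u k) :
    lazyWalkWeight cs p n (u * cs.simple k) ≤ lazyWalkWeight cs p n u := by
  induction n generalizing u with
  | zero =>
    have : u * cs.simple k ≠ 1 := by
      rw [ne_eq, ← cs.length_eq_zero_iff, cs.not_isRightDescent_iff.mp hu]
      exact Nat.succ_ne_zero _
    rw [lazyWalkWeight_zero, if_neg this]
    positivity
  | succ n ih =>
    have ih_simple_mul (i : B) (hi : cs.simple i * u ≠ u * cs.simple k) :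
        lazyWalkWeight cs p n (cs.simple i * (u * cs.simple k)) ≤
          lazyWalkWeight cs p n (cs.simple i * u) := by
      rw [← mul_assoc]
      exact ih fun h => hi (cs.simple_mul_eq_mul_simple hu h)
    rw [lazyWalkWeight_succ, lazyWalkWeight_succ]
    by_cases hcross : ∃ i₀, cs.simple i₀ * u = u * cs.simple k
    · classical
      obtain ⟨i₀, hi₀⟩ := hcross
      refine add_sum_mul_le_add_sum_mul_of_exchange hp (ih hu) (i₀ := i₀) ?_ ?_ fun i hi => ?_
      · rw [← mul_assoc, hi₀, cs.simple_mul_simple_cancel_right]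
      · rw [hi₀]
      · exact ih_simple_mul i fun h =>
          hi (cs.simple_injective_s11 (mul_right_cancel (h.trans hi₀.symm)))
    · rw [not_exists] at hcross
      gcongr with i
      · exact ih hu
      · exact ih_simple_mul i (hcross i)

theorem lazyWalkWeight_mul_wordProd_le (hp : ∀ i : B, p (some i) ≤ p none) (n : ℕ) (w : W)
    (ω : List B) (h : cs.length (w * cs.wordProd ω) = cs.length w + ω.length) :
    lazyWalkWeight cs p n (w * cs.wordProd ω) ≤ lazyWalkWeight cs p n w := by
  induction ω using List.reverseRecOn with
  | nil => simp
  | append_singleton ω i ih =>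
    rw [cs.wordProd_append, cs.wordProd_singleton, ← mul_assoc] at h ⊢
    rw [List.length_append, List.length_singleton] at h
    have h₁ := cs.length_mul_le (w * cs.wordProd ω) (cs.simple i)
    have h₂ := cs.length_mul_le w (cs.wordProd ω)
    have h₃ := cs.length_wordProd_le ω
    rw [cs.length_simple] at h₁
    have hω : cs.length (w * cs.wordProd ω) = cs.length w + ω.length := by omega
    refine (lazyWalkWeight_mul_simple_le cs hp n ?_).trans (ih hω)
    rw [cs.not_isRightDescent_iff]
    omega

end LazyWalk

/-- For a lazy random walk on a Coxeter group with step weights `p` in which the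
identity step is at least as likely as any generator, the likelihoods of states
respect the right weak Bruhat order: if `w ≤_B w'` then after any number of steps
the walk is at least as likely to be at `w` as at `w'`. -/
theorem lazyWalkWeight_le_of_weak_bruhat_le {B W : Type*} [Fintype B] [DecidableEq W]
    [Group W] {M : CoxeterMatrix B} (cs : CoxeterSystem M W) (p : Option B → ℝ≥0)
    (hp : ∀ i : B, p (some i) ≤ p none) (n : ℕ) (w w' : W)
    (h : cs.length w + cs.length (w⁻¹ * w') = cs.length w') :
    lazyWalkWeight cs p n w' ≤ lazyWalkWeight cs p n w := by
  obtain ⟨ω, hω, hx⟩ := cs.exists_isReduced (w⁻¹ * w')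
  obtain rfl : w' = w * cs.wordProd ω := by rw [← hx, mul_inv_cancel_left]
  rw [hx, hω.eq] at h
  exact lazyWalkWeight_mul_wordProd_le cs hp n w ω h.symm
end
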